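/- For n ≥ 5 odd and k with 1 ≤ k ≤ (n−1)/2, the generalized Petersen graph GP(n,k) does not admit a prime labeling when k = 2; indeed, the independence number of GP(n,2) is ⌊4n/5⌋ < n for n ≥ 5, so the condition α(G) ≥ ⌊|V(G)|/2⌋ fails. -/

import Mathlib

/-- The generalized Petersen graph `GP(n,k)`: outer cycle `v` (inl) with edges
`v_i v_{i+1}`, inner vertices `u` (inr) with edges `u_i u_{i+k}` (indices mod `n`),
and spokes `v_i u_i`. -/
def genPetersen (n k : ℕ) : SimpleGraph (ZMod n ⊕ ZMod n) :=
  SimpleGraph.fromRel (fun x y =>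
    (∃ i : ZMod n, x = Sum.inl i ∧ y = Sum.inl (i + 1)) ∨
    (∃ i : ZMod n, x = Sum.inr i ∧ y = Sum.inr (i + (k : ZMod n))) ∨
    (∃ i : ZMod n, x = Sum.inl i ∧ y = Sum.inr i))

/-- A finset of vertices is independent if no two of its members are adjacent. -/
def IsIndepFinset {V : Type*} (G : SimpleGraph V) (s : Finset V) : Prop :=
  ∀ x ∈ s, ∀ y ∈ s, ¬ G.Adj x y

/-!
The even labels of a coprime labelling by `1, …, 2n` form an independent set of size `n`, so it
suffices to bound every independent set `s` of `GP(n,2)` by `⌊4n/5⌋`. The spokes make the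
projection of `s` to the indices injective. Among five consecutive indices `i, …, i + 4` one
carries no vertex of `s`: otherwise `v_{i+1} ∉ s`, since it would force `u_i, u_{i+2} ∈ s`, and
likewise `v_{i+3} ∉ s`, leaving the adjacent `u_{i+1}, u_{i+3}` in `s`. So at least `n/5` indices
are free and `|s| ≤ 4n/5`; the bound is attained by outer vertices at indices `≡ 1, 4` and inner
ones at indices `≡ 2, 3 (mod 5)`.
-/

open Finset Pointwise

theorem exists_isIndepFinset_card_eq_half_of_coprime_labeling {V : Type*} [Fintype V]
    (G : SimpleGraph V) (f : V → ℕ) (hf : Function.Injective f)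
    (hrange : ∀ x, f x ∈ Icc 1 (Fintype.card V))
    (hcop : ∀ x y, G.Adj x y → Nat.Coprime (f x) (f y)) :
    ∃ s : Finset V, IsIndepFinset G s ∧ s.card = Fintype.card V / 2 := by
  classical
  refine ⟨univ.filter (2 ∣ f ·), fun x hx y hy hxy => ?_, ?_⟩
  · exact Nat.not_coprime_of_dvd_of_dvd one_lt_two (mem_filter.1 hx).2 (mem_filter.1 hy).2
      (hcop x y hxy)
  · have himage : univ.image f = Icc 1 (Fintype.card V) :=
      eq_of_subset_of_card_le (fun _ hm => by obtain ⟨x, -, rfl⟩ := mem_image.1 hm; exact hrange x)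
        (by simp [card_image_of_injective _ hf])
    rw [← card_image_of_injective _ hf, ← filter_image, himage, ← Nat.Ioc_filter_dvd_card_eq_div,
      ← Icc_add_one_left_eq_Ioc, zero_add]

theorem card_le_card_mul_card_of_forall_exists_add_mem {G : Type*} [AddGroup G] [Fintype G]
    [DecidableEq G] {E W : Finset G} (h : ∀ g, ∃ w ∈ W, g + w ∈ E) :
    Fintype.card G ≤ E.card * W.card := by
  have hsub : (univ : Finset G) ⊆ E - W := fun g _ => by
    obtain ⟨w, hw, hgw⟩ := h g
    simpa using sub_mem_sub hgw hw
  exact (card_le_card hsub).trans card_sub_le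

theorem card_filter_range_mod_five_ne_zero (m : ℕ) :
    #{a ∈ range m | a % 5 ≠ 0} = m - (m + 4) / 5 := by
  induction m with
  | zero => rfl
  | succ m ih =>
    rw [range_add_one, filter_insert]
    split_ifs with h
    · rw [card_insert_of_notMem (by simp), ih]; omega
    · rw [ih]; omega

theorem mem_image_elim_id_id {α : Type*} [DecidableEq α] {t : Finset (α ⊕ α)} {j : α} :
    j ∈ t.image (Sum.elim id id) ↔ .inl j ∈ t ∨ .inr j ∈ t := by
  simp [Sum.exists, eq_comm]

theorem ZMod.eq_or_eq_add_of_natCast_eq {n x b : ℕ} (hx : x < 2 * n) (hb : b < n)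
    (h : (x : ZMod n) = b) : x = b ∨ x = b + n := by
  rw [ZMod.natCast_eq_natCast_iff', Nat.mod_eq_of_lt hb] at h
  rcases lt_or_ge x n with hlt | hge
  · exact .inl (by rwa [Nat.mod_eq_of_lt hlt] at h)
  · rw [Nat.mod_eq_sub_mod hge, Nat.mod_eq_of_lt (by omega)] at h
    omega

theorem natCast_add_notMem_image_natCast {n c : ℕ} (hc : c ≤ n) {P Q : ℕ → Prop}
    [DecidablePred P] [DecidablePred Q]
    (h : ∀ a < n, ∀ b < n, P a → Q b → a + c ≠ b ∧ a + c ≠ b + n) {i : ZMod n}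
    (hi : i ∈ ((range n).filter P).image Nat.cast) :
    i + c ∉ ((range n).filter Q).image (Nat.cast : ℕ → ZMod n) := by
  simp only [mem_image, mem_filter, mem_range] at hi ⊢
  obtain ⟨a, ⟨ha, hPa⟩, rfl⟩ := hi
  rintro ⟨b, ⟨hb, hQb⟩, hab⟩
  have := ZMod.eq_or_eq_add_of_natCast_eq (x := a + c) (by omega) hb (by push_cast; exact hab.symm)
  have := h a ha b hb hPa hQb
  omega

section
variable {n k : ℕ}

theorem genPetersen_adj_inl_add_one [Nontrivial (ZMod n)] (i : ZMod n) :
    (genPetersen n k).Adj (.inl i) (.inl (i + 1)) :=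
  (SimpleGraph.fromRel_adj _ _ _).2 ⟨by simp, .inl (.inl ⟨i, rfl, rfl⟩)⟩

theorem genPetersen_adj_inr_add (hk : (k : ZMod n) ≠ 0) (i : ZMod n) :
    (genPetersen n k).Adj (.inr i) (.inr (i + k)) :=
  (SimpleGraph.fromRel_adj _ _ _).2 ⟨by simpa using hk, .inl (.inr (.inl ⟨i, rfl, rfl⟩))⟩

theorem genPetersen_adj_inl_inr (i : ZMod n) : (genPetersen n k).Adj (.inl i) (.inr i) :=
  (SimpleGraph.fromRel_adj _ _ _).2 ⟨by simp, .inl (.inr (.inr ⟨i, rfl, rfl⟩))⟩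

theorem isIndepFinset_genPetersen_of_forall {s : Finset (ZMod n ⊕ ZMod n)}
    (hout : ∀ i, .inl i ∈ s → .inl (i + 1) ∉ s) (hin : ∀ i, .inr i ∈ s → .inr (i + k) ∉ s)
    (hspoke : ∀ i, .inl i ∈ s → .inr i ∉ s) : IsIndepFinset (genPetersen n k) s := by
  intro x hx y hy hxy
  obtain ⟨-, (⟨i, rfl, rfl⟩ | ⟨i, rfl, rfl⟩ | ⟨i, rfl, rfl⟩) |
    (⟨i, rfl, rfl⟩ | ⟨i, rfl, rfl⟩ | ⟨i, rfl, rfl⟩)⟩ := (SimpleGraph.fromRel_adj _ _ _).1 hxy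
  exacts [hout i hx hy, hin i hx hy, hspoke i hx hy, hout i hy hx, hin i hy hx, hspoke i hy hx]

end

section
variable {n : ℕ} {s : Finset (ZMod n ⊕ ZMod n)}

theorem card_image_elim_id_id_of_isIndepFinset {k : ℕ}
    (hs : IsIndepFinset (genPetersen n k) s) : (s.image (Sum.elim id id)).card = s.card := by
  refine card_image_of_injOn ?_
  rintro (i | i) hx (j | j) hy (rfl : i = j)
  exacts [rfl, (hs _ hx _ hy (genPetersen_adj_inl_inr i)).elim,
    (hs _ hy _ hx (genPetersen_adj_inl_inr i)).elim, rfl]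

theorem genPetersen_two_adj_inr_add_two (h2 : (2 : ZMod n) ≠ 0) (i : ZMod n) :
    (genPetersen n 2).Adj (.inr i) (.inr (i + 2)) := by
  simpa using genPetersen_adj_inr_add (k := 2) (by simpa using h2) i

theorem inl_add_one_notMem_of_isIndepFinset [Nontrivial (ZMod n)] (h2 : (2 : ZMod n) ≠ 0)
    (hs : IsIndepFinset (genPetersen n 2) s) {j : ZMod n}
    (hj : j ∈ s.image (Sum.elim id id)) (hj2 : j + 2 ∈ s.image (Sum.elim id id)) :
    .inl (j + 1) ∉ s := by
  intro h
  have hadj := genPetersen_adj_inl_add_one (k := 2) (j + 1)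
  rw [add_assoc, one_add_one_eq_two] at hadj
  obtain hl | hr := mem_image_elim_id_id.1 hj
  · exact hs _ hl _ h (genPetersen_adj_inl_add_one j)
  obtain hl2 | hr2 := mem_image_elim_id_id.1 hj2
  · exact hs _ h _ hl2 hadj
  · exact hs _ hr _ hr2 (genPetersen_two_adj_inr_add_two h2 j)

theorem exists_add_notMem_image_elim_id_id [Nontrivial (ZMod n)] (h2 : (2 : ZMod n) ≠ 0)
    (hs : IsIndepFinset (genPetersen n 2) s) (i : ZMod n) :
    ∃ d ∈ ({0, 1, 2, 3, 4} : Finset (ZMod n)), i + d ∉ s.image (Sum.elim id id) := by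
  by_contra! h
  simp only [mem_insert, mem_singleton, forall_eq_or_imp, forall_eq, add_zero] at h
  obtain ⟨hc0, hc1, hc2, hc3, hc4⟩ := h
  have e2 : i + 2 + 2 = i + 4 := by ring
  have e3 : i + 2 + 1 = i + 3 := by ring
  have hin1 : .inr (i + 1) ∈ s :=
    (mem_image_elim_id_id.1 hc1).resolve_left (inl_add_one_notMem_of_isIndepFinset h2 hs hc0 hc2)
  have hin3 : .inr (i + 3) ∈ s := (mem_image_elim_id_id.1 hc3).resolve_left <| by
    simpa [e2, e3] using inl_add_one_notMem_of_isIndepFinset h2 hs hc2 (by rwa [e2])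
  have e13 : i + 1 + 2 = i + 3 := by ring
  exact hs _ hin1 _ hin3 (e13 ▸ genPetersen_two_adj_inr_add_two h2 (i + 1))

end

theorem card_le_of_isIndepFinset_genPetersen_two {n : ℕ} (hn : 3 ≤ n)
    {s : Finset (ZMod n ⊕ ZMod n)} (hs : IsIndepFinset (genPetersen n 2) s) :
    s.card ≤ 4 * n / 5 := by
  have : NeZero n := ⟨by omega⟩
  have : Fact (1 < n) := ⟨by omega⟩
  have h2 : (2 : ZMod n) ≠ 0 := fun h => by
    have := Nat.le_of_dvd two_pos <| (ZMod.natCast_eq_zero_iff 2 n).1 (by exact_mod_cast h)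
    omega
  set C := s.image (Sum.elim id id)
  have hC : C.card = s.card := card_image_elim_id_id_of_isIndepFinset hs
  have hgaps : n ≤ (univ \ C).card * 5 := by
    have hcover := card_le_card_mul_card_of_forall_exists_add_mem (E := univ \ C)
      (W := {0, 1, 2, 3, 4}) fun i => by
        obtain ⟨d, hd, hgap⟩ := exists_add_notMem_image_elim_id_id h2 hs i
        exact ⟨d, hd, mem_sdiff.2 ⟨mem_univ _, hgap⟩⟩
    rw [ZMod.card] at hcover
    exact hcover.trans (Nat.mul_le_mul_left _ card_le_five)
  rw [card_univ_sdiff, ZMod.card] at hgaps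
  omega

/-- Index `0` carries no vertex, so the pattern survives the wrap-around at `n`. -/
def gp2IndepSet (n : ℕ) : Finset (ZMod n ⊕ ZMod n) :=
  (((range n).filter fun a => a % 5 = 1 ∨ a % 5 = 4).image Nat.cast).disjSum
    (((range n).filter fun a => a % 5 = 2 ∨ a % 5 = 3).image Nat.cast)

theorem isIndepFinset_gp2IndepSet {n : ℕ} (hn : 2 ≤ n) :
    IsIndepFinset (genPetersen n 2) (gp2IndepSet n) := by
  refine isIndepFinset_genPetersen_of_forall ?_ ?_ ?_ <;>
    simp only [gp2IndepSet, inl_mem_disjSum, inr_mem_disjSum] <;> intro i hi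
  · simpa using natCast_add_notMem_image_natCast (c := 1) (by omega) (by omega) hi
  · simpa using natCast_add_notMem_image_natCast (c := 2) hn (by omega) hi
  · simpa using natCast_add_notMem_image_natCast (c := 0) (by omega) (by omega) hi

theorem card_gp2IndepSet (n : ℕ) : (gp2IndepSet n).card = 4 * n / 5 := by
  have hinj (P : ℕ → Prop) [DecidablePred P] :
      (((range n).filter P).image (Nat.cast : ℕ → ZMod n)).card = ((range n).filter P).card :=
    card_image_of_injOn <| (CharP.natCast_injOn_Iio (ZMod n) n).mono fun _ ha =>
      mem_range.1 (mem_filter.1 ha).1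
  rw [gp2IndepSet, card_disjSum, hinj, hinj, ← card_union_of_disjoint
    (disjoint_filter.2 fun _ _ => by omega), ← filter_or,
    filter_congr (q := (· % 5 ≠ 0)) (fun _ _ => by omega), card_filter_range_mod_five_ne_zero]
  omega

theorem gpn2_not_prime_general (n : ℕ) (hn : 5 ≤ n) :
    (¬ ∃ f : ZMod n ⊕ ZMod n → ℕ, Function.Injective f ∧
        (∀ x, f x ∈ Finset.Icc 1 (2 * n)) ∧
        (∀ x y, (genPetersen n 2).Adj x y → Nat.Coprime (f x) (f y))) ∧
    -- the independence number equals ⌊4n/5⌋, which is < n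
    ((∃ s : Finset (ZMod n ⊕ ZMod n), IsIndepFinset (genPetersen n 2) s ∧
        s.card = 4 * n / 5) ∧
      (∀ s : Finset (ZMod n ⊕ ZMod n), IsIndepFinset (genPetersen n 2) s →
        s.card ≤ 4 * n / 5)) ∧
    4 * n / 5 < n := by
  have : NeZero n := ⟨by omega⟩
  have hindep : ∀ s : Finset (ZMod n ⊕ ZMod n), IsIndepFinset (genPetersen n 2) s →
      s.card ≤ 4 * n / 5 := fun s => card_le_of_isIndepFinset_genPetersen_two (by omega)
  refine ⟨?_, ⟨⟨gp2IndepSet n, isIndepFinset_gp2IndepSet (by omega), card_gp2IndepSet n⟩,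
    hindep⟩, by omega⟩
  rintro ⟨f, hf, hrange, hcop⟩
  have hcard : Fintype.card (ZMod n ⊕ ZMod n) = 2 * n := by
    rw [Fintype.card_sum, ZMod.card, two_mul]
  obtain ⟨s, hs, hscard⟩ := exists_isIndepFinset_card_eq_half_of_coprime_labeling _ f hf
    (hcard ▸ hrange) hcop
  have := hindep s hs
  omega

theorem gpn2_not_prime (n : ℕ) (hn : 5 ≤ n) (hodd : Odd n) :
    (¬ ∃ f : ZMod n ⊕ ZMod n → ℕ, Function.Injective f ∧
        (∀ x, f x ∈ Finset.Icc 1 (2 * n)) ∧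
        (∀ x y, (genPetersen n 2).Adj x y → Nat.Coprime (f x) (f y))) ∧
    -- the independence number equals ⌊4n/5⌋, which is < n
    ((∃ s : Finset (ZMod n ⊕ ZMod n), IsIndepFinset (genPetersen n 2) s ∧
        s.card = 4 * n / 5) ∧
      (∀ s : Finset (ZMod n ⊕ ZMod n), IsIndepFinset (genPetersen n 2) s →
        s.card ≤ 4 * n / 5)) ∧
    4 * n / 5 < n :=
  gpn2_not_prime_general n hn
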